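/- arXiv:1006.1996 — 5 statements merged into one kernel-verified Lean document; each statement's English description precedes it below -/
import Mathlib

section
/- Let a_1, ..., a_n be distinct nonzero complex numbers, f : ℂ → ℂ any function, and g(z) := f(z^2). Then f[0, a_1^2, ..., a_n^2] = g[-a_n, ..., -a_1, 0, a_1, ..., a_n], provided the points 0, a_1^2, ..., a_n^2 are distinct and the points ±a_1, ..., ±a_n, 0 are distinct. -/
/-- Divided difference of a complex function at points `a 0, ..., a n`. -/
noncomputable def divDiffC (f : ℂ → ℂ) : ℕ → (ℕ → ℂ) → ℂ
  | 0, a => f (a 0)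
  | (n+1), a => (divDiffC f n (fun i => a (i+1)) - divDiffC f n a) / (a (n+1) - a 0)

open Finset

lemma prod_erase_ite (s : Finset ℕ) (i : ℕ) (hi : i ∈ s) (h : ℕ → ℂ) :
    ∏ j ∈ s.erase i, h j = ∏ j ∈ s, (if j = i then 1 else h j) := by
  rw [← Finset.mul_prod_erase s _ hi, if_pos rfl, one_mul]
  exact Finset.prod_congr rfl (fun j hj => by rw [if_neg (Finset.ne_of_mem_erase hj)])

lemma lagrange (f : ℂ → ℂ) : ∀ (n : ℕ) (a : ℕ → ℂ),
    (∀ i j, i ≤ n → j ≤ n → i ≠ j → a i ≠ a j) →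
    divDiffC f n a = ∑ i ∈ range (n+1),
      f (a i) * (∏ j ∈ (range (n+1)).erase i, (a i - a j))⁻¹ := by
  intro n
  induction n with
  | zero => intro a _; simp [divDiffC]
  | succ n ih =>
    intro a hdist
    have hd : a (n+1) - a 0 ≠ 0 := sub_ne_zero.2 (hdist (n+1) 0 le_rfl (by omega) (by omega))
    have h1 : divDiffC f n (fun i => a (i+1)) = ∑ i ∈ range (n+1),
        f (a (i+1)) * (∏ j ∈ (range (n+1)).erase i, (a (i+1) - a (j+1)))⁻¹ :=
      ih _ (fun i j hi hj hij => hdist (i+1) (j+1) (by omega) (by omega) (by omega))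
    have h0 : divDiffC f n a = ∑ i ∈ range (n+1),
        f (a i) * (∏ j ∈ (range (n+1)).erase i, (a i - a j))⁻¹ :=
      ih _ (fun i j hi hj hij => hdist i j (by omega) (by omega) hij)
    -- Q1 i : product over ((range (n+2)).erase 0).erase i
    set Q1 : ℕ → ℂ := fun i => ∏ j ∈ ((range (n+2)).erase 0).erase i, (a i - a j) with hQ1def
    set Q0 : ℕ → ℂ := fun i => ∏ j ∈ (range (n+1)).erase i, (a i - a j) with hQ0def
    -- shift the products in h1
    have hshift : ∀ i < n + 1,
        (∏ j ∈ (range (n+1)).erase i, (a (i+1) - a (j+1))) = Q1 (i+1) := by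
      intro i hi
      have hmem : i + 1 ∈ (range (n+2)).erase 0 := by simp; omega
      rw [hQ1def]
      simp only
      rw [prod_erase_ite _ _ hmem (fun j => a (i+1) - a j),
        prod_erase_ite (range (n+2)) 0 (by simp) (fun j => if j = i+1 then 1 else a (i+1) - a j),
        prod_erase_ite (range (n+1)) i (by simp [hi]) (fun j => a (i+1) - a (j+1))]
      rw [Finset.prod_range_succ' (fun j => if j = 0 then 1 else if j = i+1 then 1 else a (i+1) - a j) (n+1)]
      simp
    have h1' : divDiffC f n (fun i => a (i+1)) = ∑ i ∈ range (n+2),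
        (if i = 0 then 0 else f (a i) * (Q1 i)⁻¹) := by
      rw [h1, Finset.sum_range_succ' (fun i => if i = 0 then 0 else f (a i) * (Q1 i)⁻¹) (n+1)]
      norm_num
      exact Finset.sum_congr rfl (fun i hi => by rw [hshift i (mem_range.1 hi)])
    have h0' : divDiffC f n a = ∑ i ∈ range (n+2),
        (if i = n+1 then 0 else f (a i) * (Q0 i)⁻¹) := by
      rw [h0, Finset.sum_range_succ (fun i => if i = n+1 then 0 else f (a i) * (Q0 i)⁻¹) (n+1)]
      norm_num
      refine Finset.sum_congr rfl (fun i hi => ?_)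
      rw [if_neg (by simp at hi; omega)]
    show (divDiffC f n (fun i => a (i+1)) - divDiffC f n a) / (a (n+1) - a 0) = _
    rw [h1', h0', div_eq_mul_inv, ← Finset.sum_sub_distrib, Finset.sum_mul]
    refine Finset.sum_congr rfl (fun i hi => ?_)
    have hi2 : i < n + 2 := mem_range.1 hi
    have hPsplit0 : ∀ i ≤ n, (∏ j ∈ (range (n+2)).erase i, (a i - a j))
        = (a i - a (n+1)) * Q0 i := by
      intro i hin
      have hmem : n + 1 ∈ (range (n+2)).erase i := by simp; omega
      rw [← Finset.mul_prod_erase _ _ hmem, Finset.erase_right_comm,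
        show (range (n+2)).erase (n+1) = range (n+1) from by ext j; simp; omega]
    have hPsplit1 : ∀ i, 1 ≤ i → i ≤ n + 1 → (∏ j ∈ (range (n+2)).erase i, (a i - a j))
        = (a i - a 0) * Q1 i := by
      intro i h1i hin
      have hmem : 0 ∈ (range (n+2)).erase i := by simp; omega
      rw [← Finset.mul_prod_erase _ _ hmem, Finset.erase_right_comm]
    rcases Nat.eq_zero_or_pos i with rfl | hip
    · rw [if_pos rfl, if_neg (by omega), hPsplit0 0 (by omega)]
      have : a 0 - a (n+1) = -(a (n+1) - a 0) := by ring
      rw [this, mul_inv, inv_neg]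
      ring
    · rcases eq_or_lt_of_le (show i ≤ n + 1 by omega) with rfl | hilt
      · rw [if_neg (by omega), if_pos rfl, hPsplit1 (n+1) (by omega) le_rfl, mul_inv]
        ring
      · have hin : i ≤ n := by omega
        rw [if_neg (by omega), if_neg (by omega), hPsplit0 i hin]
        have key : (a i - a (n+1)) * Q0 i = (a i - a 0) * Q1 i := by
          rw [← hPsplit0 i hin, hPsplit1 i (by omega) (by omega)]
        have hQ0ne : Q0 i ≠ 0 := by
          rw [hQ0def]
          refine Finset.prod_ne_zero_iff.2 (fun j hj => sub_ne_zero.2 ?_)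
          simp only [Finset.mem_erase, Finset.mem_range] at hj
          exact hdist i j (by omega) (by omega) (by omega)
        have hQ1ne : Q1 i ≠ 0 := by
          rw [hQ1def]
          refine Finset.prod_ne_zero_iff.2 (fun j hj => sub_ne_zero.2 ?_)
          simp only [Finset.mem_erase, Finset.mem_range] at hj
          exact hdist i j (by omega) (by omega) (by omega)
        have he0 : a i - a 0 ≠ 0 := sub_ne_zero.2 (hdist i 0 (by omega) (by omega) (by omega))
        have he1 : a i - a (n+1) ≠ 0 := sub_ne_zero.2 (hdist i (n+1) (by omega) (by omega) (by omega))
        rw [key]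
        have eA : (Q1 i)⁻¹ = (a i - a 0) * ((a i - a 0) * Q1 i)⁻¹ := by
          rw [mul_inv, ← mul_assoc, mul_inv_cancel₀ he0, one_mul]
        have eB : (Q0 i)⁻¹ = (a i - a (n+1)) * ((a i - a 0) * Q1 i)⁻¹ := by
          rw [← key, mul_inv, ← mul_assoc, mul_inv_cancel₀ he1, one_mul]
        rw [eA, eB]
        have hdd : (a (n + 1) - a 0) * (a (n + 1) - a 0)⁻¹ = 1 := mul_inv_cancel₀ hd
        linear_combination (f (a i) * ((a i - a 0) * Q1 i)⁻¹) * hdd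

/-- `f[0, a₁², ..., aₙ²] = g[-aₙ, ..., -a₁, 0, a₁, ..., aₙ]` where `g z = f (z²)`. -/
theorem divDiff_sq (n : ℕ) (a : ℕ → ℂ) (f : ℂ → ℂ)
    (hne : ∀ i, 1 ≤ i → i ≤ n → a i ≠ 0)
    (hsq : ∀ i j, 1 ≤ i → i ≤ n → 1 ≤ j → j ≤ n → i ≠ j → a i ^ 2 ≠ a j ^ 2)
    (hpm : ∀ i j, 1 ≤ i → i ≤ n → 1 ≤ j → j ≤ n → i ≠ j → a i ≠ -a j) :
    divDiffC f n (fun i => if i = 0 then 0 else a i ^ 2) =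
      divDiffC (fun z => f (z ^ 2)) (2 * n)
        (fun i => if i < n then -a (n - i) else if i = n then 0 else a (i - n)) := by
  have ha : ∀ i j, 1 ≤ i → i ≤ n → 1 ≤ j → j ≤ n → i ≠ j → a i ≠ a j := by
    intro i j h1 h2 h3 h4 h5 heq
    exact hsq i j h1 h2 h3 h4 h5 (by rw [heq])
  set x : ℕ → ℂ := fun i => if i = 0 then 0 else a i ^ 2 with hx_def
  set y : ℕ → ℂ := fun i => if i < n then -a (n - i) else if i = n then 0 else a (i - n)
    with hy_def
  have hx0 : x 0 = 0 := by simp [hx_def]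
  have hxs : ∀ i, 1 ≤ i → x i = a i ^ 2 := by
    intro i hi; simp only [hx_def]; rw [if_neg (by omega)]
  have hyl : ∀ i, i < n → y i = -a (n - i) := by
    intro i hi; simp only [hy_def]; rw [if_pos hi]
  have hyn : y n = 0 := by simp [hy_def]
  have hyr : ∀ i, n < i → y i = a (i - n) := by
    intro i hi; simp only [hy_def]; rw [if_neg (by omega), if_neg (by omega)]
  have hx : ∀ i j, i ≤ n → j ≤ n → i ≠ j → x i ≠ x j := by
    intro i j hi hj hij
    by_cases hi0 : i = 0
    · subst hi0
      rw [hx0, hxs j (by omega)]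
      exact (pow_ne_zero 2 (hne j (by omega) hj)).symm
    · by_cases hj0 : j = 0
      · subst hj0
        rw [hx0, hxs i (by omega)]
        exact pow_ne_zero 2 (hne i (by omega) hi)
      · rw [hxs i (by omega), hxs j (by omega)]
        exact hsq i j (by omega) hi (by omega) hj hij
  have hself : ∀ k, 1 ≤ k → k ≤ n → -a k ≠ a k := by
    intro k h1 h2 he
    apply hne k h1 h2
    have h2' : a k + a k = 0 := by linear_combination -he
    exact add_self_eq_zero.mp h2'
  have hy : ∀ i j, i ≤ 2*n → j ≤ 2*n → i ≠ j → y i ≠ y j := by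
    intro i j hi hj hij
    rcases lt_trichotomy i n with h | h | h <;> rcases lt_trichotomy j n with h' | h' | h'
    · rw [hyl i h, hyl j h']
      exact fun he => ha (n-i) (n-j) (by omega) (by omega) (by omega) (by omega) (by omega)
        (neg_injective he)
    · rw [hyl i h, h', hyn]
      exact neg_ne_zero.2 (hne (n-i) (by omega) (by omega))
    · rw [hyl i h, hyr j h']
      by_cases hc : j - n = n - i
      · rw [hc]; exact hself (n-i) (by omega) (by omega)
      · exact fun he => hpm (j-n) (n-i) (by omega) (by omega) (by omega) (by omega) hc he.symm
    · rw [h, hyn, hyl j h']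
      exact (neg_ne_zero.2 (hne (n-j) (by omega) (by omega))).symm
    · omega
    · rw [h, hyn, hyr j h']
      exact (hne (j-n) (by omega) (by omega)).symm
    · rw [hyr i h, hyl j h']
      by_cases hc : i - n = n - j
      · rw [hc]; exact (hself (n-j) (by omega) (by omega)).symm
      · exact hpm (i-n) (n-j) (by omega) (by omega) (by omega) (by omega) hc
    · rw [hyr i h, h', hyn]
      exact hne (i-n) (by omega) (by omega)
    · rw [hyr i h, hyr j h']
      exact ha (i-n) (j-n) (by omega) (by omega) (by omega) (by omega) (by omega)
  rw [lagrange f n x hx, lagrange (fun z => f (z ^ 2)) (2*n) y hy]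
  set L : ℕ → ℂ := fun i => f (x i) * (∏ j ∈ (range (n+1)).erase i, (x i - x j))⁻¹ with hL_def
  set T : ℕ → ℂ := fun i => f (y i ^ 2) * (∏ j ∈ (range (2*n+1)).erase i, (y i - y j))⁻¹
    with hT_def
  show ∑ i ∈ range (n+1), L i = ∑ i ∈ range (2*n+1), T i
  have hsplitT : ∑ i ∈ range (2*n+1), T i
      = (∑ i ∈ range n, T i) + ∑ i ∈ range (n+1), T (n+i) := by
    rw [show 2*n+1 = n+(n+1) from by omega, Finset.sum_range_add]
  rw [hsplitT, Finset.sum_range_succ' L n, Finset.sum_range_succ' (fun i => T (n+i)) n,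
    ← Finset.sum_range_reflect T n]
  have hL0T : L 0 = T (n+0) := by
    show f (x 0) * (∏ j ∈ (range (n+1)).erase 0, (x 0 - x j))⁻¹
      = f (y (n+0) ^ 2) * (∏ j ∈ (range (2*n+1)).erase (n+0), (y (n+0) - y j))⁻¹
    simp only [Nat.add_zero]
    have e1 : ∏ j ∈ (range (n+1)).erase 0, (x 0 - x j) = ∏ j ∈ range n, (0 - a (j+1)^2) := by
      rw [prod_erase_ite _ 0 (by simp) (fun j => x 0 - x j),
          Finset.prod_range_succ' (fun j => if j = 0 then 1 else x 0 - x j) n]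
      norm_num
      exact Finset.prod_congr rfl (fun j hj => by rw [hx0, hxs (j+1) (by omega)]; ring)
    have e2 : ∏ j ∈ (range (2*n+1)).erase n, (y n - y j)
        = (∏ j ∈ range n, a (j+1)) * ∏ j ∈ range n, -(a (j+1)) := by
      rw [prod_erase_ite _ n (by simp; omega) (fun j => y n - y j),
          show (2*n+1) = n + (n+1) from by omega,
          Finset.prod_range_add (fun j => if j = n then 1 else y n - y j) n (n+1)]
      congr 1
      · rw [← Finset.prod_range_reflect (fun j => if j = n then 1 else y n - y j) n]
        refine Finset.prod_congr rfl (fun j hj => ?_)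
        have hjn := mem_range.1 hj
        rw [if_neg (by omega), hyn, hyl (n-1-j) (by omega),
          show n - (n-1-j) = j+1 from by omega]
        ring
      · rw [Finset.prod_range_succ' (fun j => if n + j = n then 1 else y n - y (n+j)) n]
        rw [show (if n + 0 = n then (1:ℂ) else y n - y (n+0)) = 1 from if_pos (by omega), mul_one]
        refine Finset.prod_congr rfl (fun j hj => ?_)
        rw [if_neg (by omega), hyn, hyr (n+(j+1)) (by omega),
          show n+(j+1)-n = j+1 from by omega]
        ring
    rw [e1, e2, hx0, hyn, show ((0:ℂ))^2 = 0 from by norm_num]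
    congr 2
    rw [← Finset.prod_mul_distrib]
    exact Finset.prod_congr rfl (fun j _ => by ring)
  have hpairT : ∀ k ∈ range n, L (k+1) = T (n-1-k) + T (n+(k+1)) := by
    intro k hk'
    have hk : k < n := mem_range.1 hk'
    have hyvm : y (n-1-k) = -a (k+1) := by
      rw [hyl _ (by omega), show n - (n-1-k) = k+1 from by omega]
    have hyvp : y (n+(k+1)) = a (k+1) := by
      rw [hyr _ (by omega), show n+(k+1)-n = k+1 from by omega]
    show f (x (k+1)) * (∏ j ∈ (range (n+1)).erase (k+1), (x (k+1) - x j))⁻¹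
      = f (y (n-1-k) ^ 2) * (∏ j ∈ (range (2*n+1)).erase (n-1-k), (y (n-1-k) - y j))⁻¹
      + f (y (n+(k+1)) ^ 2) * (∏ j ∈ (range (2*n+1)).erase (n+(k+1)), (y (n+(k+1)) - y j))⁻¹
    have eA : ∏ j ∈ (range (n+1)).erase (k+1), (x (k+1) - x j)
        = (∏ j ∈ range n, (if j = k then 1 else a (k+1)^2 - a (j+1)^2)) * a (k+1)^2 := by
      rw [prod_erase_ite _ (k+1) (by simp; omega) (fun j => x (k+1) - x j),
          Finset.prod_range_succ' (fun j => if j = k+1 then 1 else x (k+1) - x j) n]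
      congr 1
      · refine Finset.prod_congr rfl (fun j hj => ?_)
        by_cases h : j = k
        · rw [if_pos (by omega), if_pos h]
        · rw [if_neg (by omega), if_neg h, hxs (k+1) (by omega), hxs (j+1) (by omega)]
      · rw [if_neg (by omega), hxs (k+1) (by omega), hx0, sub_zero]
    have eBp : ∏ j ∈ (range (2*n+1)).erase (n+(k+1)), (y (n+(k+1)) - y j)
        = (∏ j ∈ range n, (a (k+1) + a (j+1))) *
          ((∏ j ∈ range n, (if j = k then 1 else a (k+1) - a (j+1))) * a (k+1)) := by
      rw [prod_erase_ite _ (n+(k+1)) (by simp; omega) (fun j => y (n+(k+1)) - y j),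
          show (2*n+1) = n + (n+1) from by omega,
          Finset.prod_range_add
            (fun j => if j = n+(k+1) then 1 else y (n+(k+1)) - y j) n (n+1)]
      congr 1
      · rw [← Finset.prod_range_reflect
            (fun j => if j = n+(k+1) then 1 else y (n+(k+1)) - y j) n]
        refine Finset.prod_congr rfl (fun j hj => ?_)
        have hjn := mem_range.1 hj
        rw [if_neg (by omega), hyvp, hyl (n-1-j) (by omega),
          show n - (n-1-j) = j+1 from by omega]
        ring
      · rw [Finset.prod_range_succ'
            (fun j => if n + j = n+(k+1) then 1 else y (n+(k+1)) - y (n+j)) n]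
        congr 1
        · refine Finset.prod_congr rfl (fun j hj => ?_)
          by_cases h : j = k
          · rw [if_pos (by omega), if_pos h]
          · rw [if_neg (by omega), if_neg h, hyvp, hyr (n+(j+1)) (by omega),
              show n+(j+1)-n = j+1 from by omega]
        · rw [if_neg (by omega), hyvp, show n+0 = n from rfl, hyn, sub_zero]
    have eBm : ∏ j ∈ (range (2*n+1)).erase (n-1-k), (y (n-1-k) - y j)
        = (∏ j ∈ range n, (if j = k then 1 else a (j+1) - a (k+1))) *
          ((∏ j ∈ range n, (-a (k+1) - a (j+1))) * (-a (k+1))) := by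
      rw [prod_erase_ite _ (n-1-k) (by simp; omega) (fun j => y (n-1-k) - y j),
          show (2*n+1) = n + (n+1) from by omega,
          Finset.prod_range_add
            (fun j => if j = n-1-k then 1 else y (n-1-k) - y j) n (n+1)]
      congr 1
      · rw [← Finset.prod_range_reflect
            (fun j => if j = n-1-k then 1 else y (n-1-k) - y j) n]
        refine Finset.prod_congr rfl (fun j hj => ?_)
        have hjn := mem_range.1 hj
        by_cases h : j = k
        · rw [if_pos (by omega), if_pos h]
        · rw [if_neg (by omega), if_neg h, hyvm, hyl (n-1-j) (by omega),
            show n - (n-1-j) = j+1 from by omega]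
          ring
      · rw [Finset.prod_range_succ'
            (fun j => if n + j = n-1-k then 1 else y (n-1-k) - y (n+j)) n]
        congr 1
        · refine Finset.prod_congr rfl (fun j hj => ?_)
          rw [if_neg (by omega), hyvm, hyr (n+(j+1)) (by omega),
            show n+(j+1)-n = j+1 from by omega]
        · rw [if_neg (by omega), hyvm, show n+0 = n from rfl, hyn, sub_zero]
    rw [eA, eBp, eBm, hyvm, hyvp, hxs (k+1) (by omega),
      show (-a (k+1))^2 = a (k+1)^2 from by ring]
    have key1 : (∏ j ∈ range n, (if j = k then 1 else a (j+1) - a (k+1))) *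
          ((∏ j ∈ range n, (-a (k+1) - a (j+1))) * (-a (k+1)))
        = (∏ j ∈ range n, (a (k+1) + a (j+1))) *
          ((∏ j ∈ range n, (if j = k then 1 else a (k+1) - a (j+1))) * a (k+1)) := by
      have l1 : ∀ j ∈ range n, (if j = k then 1 else a (j+1) - a (k+1)) * (-a (k+1) - a (j+1))
          = (if j = k then (-1:ℂ) else 1) *
            ((a (k+1) + a (j+1)) * (if j = k then 1 else a (k+1) - a (j+1))) := by
        intro j _; by_cases h : j = k
        · rw [if_pos h, if_pos h, if_pos h, h]; ring
        · rw [if_neg h, if_neg h, if_neg h]; ring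
      calc (∏ j ∈ range n, (if j = k then 1 else a (j+1) - a (k+1))) *
            ((∏ j ∈ range n, (-a (k+1) - a (j+1))) * (-a (k+1)))
          = (∏ j ∈ range n, (if j = k then 1 else a (j+1) - a (k+1)) * (-a (k+1) - a (j+1)))
              * (-a (k+1)) := by rw [Finset.prod_mul_distrib]; ring
        _ = (∏ j ∈ range n, (if j = k then (-1:ℂ) else 1) *
              ((a (k+1) + a (j+1)) * (if j = k then 1 else a (k+1) - a (j+1)))) * (-a (k+1)) := by
            rw [Finset.prod_congr rfl l1]
        _ = ((∏ j ∈ range n, (if j = k then (-1:ℂ) else 1)) *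
              ∏ j ∈ range n, (a (k+1) + a (j+1)) * (if j = k then 1 else a (k+1) - a (j+1)))
              * (-a (k+1)) := by rw [Finset.prod_mul_distrib]
        _ = (∏ j ∈ range n, (a (k+1) + a (j+1)) * (if j = k then 1 else a (k+1) - a (j+1)))
              * a (k+1) := by
            rw [Finset.prod_ite_eq' (range n) k (fun _ => (-1:ℂ)), if_pos (mem_range.2 hk)]
            ring
        _ = (∏ j ∈ range n, (a (k+1) + a (j+1))) *
              ((∏ j ∈ range n, (if j = k then 1 else a (k+1) - a (j+1))) * a (k+1)) := by
            rw [Finset.prod_mul_distrib]; ring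
    have key2 : (∏ j ∈ range n, (a (k+1) + a (j+1))) *
          ((∏ j ∈ range n, (if j = k then 1 else a (k+1) - a (j+1))) * a (k+1))
        = 2 * ((∏ j ∈ range n, (if j = k then 1 else a (k+1)^2 - a (j+1)^2)) * a (k+1)^2) := by
      have l2 : ∀ j ∈ range n, (a (k+1) + a (j+1)) * (if j = k then 1 else a (k+1) - a (j+1))
          = (if j = k then 2*a (k+1) else 1) *
            (if j = k then 1 else a (k+1)^2 - a (j+1)^2) := by
        intro j _; by_cases h : j = k
        · rw [if_pos h, if_pos h, if_pos h, h]; ring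
        · rw [if_neg h, if_neg h, if_neg h]; ring
      calc (∏ j ∈ range n, (a (k+1) + a (j+1))) *
            ((∏ j ∈ range n, (if j = k then 1 else a (k+1) - a (j+1))) * a (k+1))
          = (∏ j ∈ range n, (a (k+1) + a (j+1)) * (if j = k then 1 else a (k+1) - a (j+1)))
              * a (k+1) := by rw [Finset.prod_mul_distrib]; ring
        _ = (∏ j ∈ range n, (if j = k then 2*a (k+1) else 1) *
              (if j = k then 1 else a (k+1)^2 - a (j+1)^2)) * a (k+1) := by
            rw [Finset.prod_congr rfl l2]
        _ = ((∏ j ∈ range n, (if j = k then 2*a (k+1) else 1)) *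
              ∏ j ∈ range n, (if j = k then 1 else a (k+1)^2 - a (j+1)^2)) * a (k+1) := by
            rw [Finset.prod_mul_distrib]
        _ = 2 * ((∏ j ∈ range n, (if j = k then 1 else a (k+1)^2 - a (j+1)^2)) * a (k+1)^2) := by
            rw [Finset.prod_ite_eq' (range n) k (fun _ => 2*a (k+1)), if_pos (mem_range.2 hk)]
            ring
    rw [key1, key2, mul_inv]
    ring
  rw [Finset.sum_congr rfl hpairT, Finset.sum_add_distrib, hL0T]
  ring
end

section
/- Leibniz rule for divided differences: if u = v · w for functions v, w : D → ℂ and z_0, ..., z_n are distinct points of D ⊆ ℂ, then u[z_0, ..., z_n] = Σ_{k=0}^n v[z_0, ..., z_k] · w[z_k, ..., z_n]. -/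
open Finset

theorem divDiffC_succ_mul_sub (f : ℂ → ℂ) (n : ℕ) (a : ℕ → ℂ)
    (h : a (n + 1) ≠ a 0) :
    divDiffC f (n + 1) a * (a (n + 1) - a 0) =
      divDiffC f n (fun i => a (i + 1)) - divDiffC f n a :=
  div_mul_cancel₀ _ (sub_ne_zero.mpr h)

noncomputable def leibnizSum (v w : ℂ → ℂ) (n : ℕ) (z : ℕ → ℂ) : ℂ :=
  ∑ k ∈ range (n + 1), divDiffC v k z * divDiffC w (n - k) (fun i => z (i + k))

theorem leibnizSum_succ_mul_sub (v w : ℂ → ℂ) (n : ℕ) (z : ℕ → ℂ)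
    (hdist : ∀ i j, i ≤ n + 1 → j ≤ n + 1 → i ≠ j → z i ≠ z j) :
    leibnizSum v w (n + 1) z * (z (n + 1) - z 0) =
      leibnizSum v w n (fun i => z (i + 1)) - leibnizSum v w n z := by
  have hv : ∀ k ≤ n, divDiffC v (k + 1) z * (z (k + 1) - z 0) =
      divDiffC v k (fun i => z (i + 1)) - divDiffC v k z := fun k hk =>
    divDiffC_succ_mul_sub v k z (hdist (k + 1) 0 (by omega) (by omega) (by omega))
  have hw : ∀ k ≤ n, divDiffC w (n + 1 - k) (fun i => z (i + k)) * (z (n + 1) - z k) =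
      divDiffC w (n - k) (fun i => z (i + k + 1)) - divDiffC w (n - k) (fun i => z (i + k)) := by
    intro k hk
    obtain ⟨m, rfl⟩ := Nat.exists_eq_add_of_le hk
    rw [show k + m + 1 - k = m + 1 by omega, Nat.add_sub_cancel_left]
    convert divDiffC_succ_mul_sub w m (fun i => z (i + k)) ?_ using 4
    · omega
    · omega
    · rw [add_right_comm]
    · simpa [add_comm, add_assoc] using hdist (k + m + 1) k le_rfl (by omega) (by omega)
  calc leibnizSum v w (n + 1) z * (z (n + 1) - z 0)
      = ∑ k ∈ range (n + 2), (divDiffC v k z *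
            (divDiffC w (n + 1 - k) (fun i => z (i + k)) * (z (n + 1) - z k)) +
          divDiffC v k z * (z k - z 0) * divDiffC w (n + 1 - k) (fun i => z (i + k))) := by
        rw [leibnizSum, sum_mul]
        exact sum_congr rfl fun k _ => by ring
    _ = ∑ k ∈ range (n + 1), (divDiffC v k z *
            (divDiffC w (n + 1 - k) (fun i => z (i + k)) * (z (n + 1) - z k)) +
          divDiffC v (k + 1) z * (z (k + 1) - z 0) *
            divDiffC w (n - k) (fun i => z (i + k + 1))) := by
        rw [sum_add_distrib, sum_add_distrib, sum_range_succ, sum_range_succ' _ (n + 1)]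
        simp [add_assoc]
    _ = leibnizSum v w n (fun i => z (i + 1)) - leibnizSum v w n z := by
        rw [leibnizSum, leibnizSum, ← sum_sub_distrib]
        refine sum_congr rfl fun k hk => ?_
        rw [hw k (mem_range_succ_iff.mp hk), hv k (mem_range_succ_iff.mp hk)]
        ring

/-- **Leibniz rule** for divided differences of a product. -/
theorem divDiff_leibniz (n : ℕ) (v w : ℂ → ℂ) (z : ℕ → ℂ)
    (hdist : ∀ i j, i ≤ n → j ≤ n → i ≠ j → z i ≠ z j) :
    divDiffC (fun x => v x * w x) n z =
      ∑ k ∈ Finset.range (n + 1),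
        divDiffC v k z * divDiffC w (n - k) (fun i => z (i + k)) := by
  show _ = leibnizSum v w n z
  induction n generalizing z with
  | zero => simp [divDiffC, leibnizSum]
  | succ n ih =>
    have h0 : z (n + 1) - z 0 ≠ 0 :=
      sub_ne_zero.mpr (hdist (n + 1) 0 le_rfl (by omega) (by omega))
    rw [divDiffC, div_eq_iff h0, leibnizSum_succ_mul_sub v w n z hdist,
      ih (fun i => z (i + 1)) fun i j _ _ hij =>
        hdist (i + 1) (j + 1) (by omega) (by omega) (by omega),
      ih z fun i j _ _ hij => hdist i j (by omega) (by omega) hij]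
end

section
/- For distinct real numbers a_1, ..., a_n, the iterated integral ∫_0^1 dx_n ∫_0^{x_n} dx_{n-1} ... ∫_0^{x_2} dx_1 exp(a_1 x_1 + ... + a_n x_n) equals exp[0, a_n, a_n + a_{n-1}, ..., a_n + ... + a_1], where the points 0, a_n, a_n+a_{n-1}, ..., a_n+...+a_1 are assumed distinct. -/
open MeasureTheory

/-- Divided difference at points `a 0, ..., a n`, defined recursively. -/
noncomputable def divDiff (f : ℝ → ℝ) : ℕ → (ℕ → ℝ) → ℝ
  | 0, a => f (a 0)
  | (n+1), a => (divDiff f n (fun i => a (i+1)) - divDiff f n a) / (a (n+1) - a 0)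

/-!
Integrating out the innermost variable `x₁ ∈ [0, x₂]` turns `e^{a₁x₁}` into `(e^{a₁x₂} - 1)/a₁`,
so the integral `I(a₁, …, aₙ)` equals `(I(a₁ + a₂, a₃, …, aₙ) - I(a₂, …, aₙ)) / a₁`.
With `p_k = aₙ + ⋯ + a_{n-k+1}`, the points attached to these two smaller integrals are
`p₀, …, p_{n-2}, pₙ` and `p₀, …, p_{n-1}`, while `a₁ = pₙ - p_{n-1}`: this is the recursion of
divided differences that drops one of the last two points, and induction on `n` concludes.
-/

open Set Function

section DividedDifference

variable (f : ℝ → ℝ)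

lemma divDiff_succ (n : ℕ) (a : ℕ → ℝ) :
    divDiff f (n + 1) a = (divDiff f n (a ∘ Nat.succ) - divDiff f n a) / (a (n + 1) - a 0) :=
  rfl

lemma divDiff_congr : ∀ {n : ℕ} {a b : ℕ → ℝ}, EqOn a b (Iic n) → divDiff f n a = divDiff f n b
  | 0, _, _, h => by rw [divDiff, divDiff, h (mem_Iic.2 le_rfl)]
  | n + 1, a, b, h => by
    have hsucc : divDiff f n (a ∘ Nat.succ) = divDiff f n (b ∘ Nat.succ) :=
      divDiff_congr fun i hi => h (mem_Iic.2 (Nat.succ_le_succ (mem_Iic.1 hi)))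
    rw [divDiff_succ, divDiff_succ, hsucc, divDiff_congr (h.mono (Iic_subset_Iic.2 n.le_succ)),
      h (mem_Iic.2 le_rfl), h (mem_Iic.2 (Nat.zero_le _))]

lemma Set.InjOn.update_self_succ {β : Type*} {y : ℕ → β} {n : ℕ} (hy : InjOn y (Iic (n + 1))) :
    InjOn (update y n (y (n + 1))) (Iic n) := by
  intro i hi j hj hij
  simp only [mem_Iic, update_apply] at hi hj hij
  have mem : ∀ {k}, k ≤ n + 1 → k ∈ Iic (n + 1) := mem_Iic.2
  split_ifs at hij with h₁ h₂ h₂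
  · omega
  · exact absurd (hy (mem le_rfl) (mem (by omega)) hij) (by omega)
  · exact absurd (hy (mem (by omega)) (mem le_rfl) hij) (by omega)
  · exact hy (mem (by omega)) (mem (by omega)) hij

theorem divDiff_succ_eq_update : ∀ {n : ℕ} {y : ℕ → ℝ}, InjOn y (Iic (n + 1)) →
    divDiff f (n + 1) y =
      (divDiff f n (update y n (y (n + 1))) - divDiff f n y) / (y (n + 1) - y n)
  | 0, y, _ => by simp [divDiff]
  | n + 1, y, hy => by
    have hne : ∀ i j, i ≤ n + 2 → j ≤ n + 2 → i ≠ j → y i - y j ≠ 0 := fun i j hi hj hij =>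
      sub_ne_zero.2 (hy.ne (mem_Iic.2 hi) (mem_Iic.2 hj) hij)
    have hsucc : divDiff f (n + 1) (y ∘ Nat.succ) = (divDiff f n (update (y ∘ Nat.succ) n
        (y (n + 2))) - divDiff f n (y ∘ Nat.succ)) / (y (n + 2) - y (n + 1)) :=
      divDiff_succ_eq_update fun i hi j hj hij => Nat.succ_injective <|
        hy (mem_Iic.2 (Nat.succ_le_succ (mem_Iic.1 hi)))
          (mem_Iic.2 (Nat.succ_le_succ (mem_Iic.1 hj))) hij
    have hupdate : divDiff f n (update y (n + 1) (y (n + 2))) = divDiff f n y :=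
      divDiff_congr f fun i hi => update_of_ne (by simp at hi; omega) _ _
    rw [divDiff_succ _ (n + 1) y, hsucc, divDiff_succ _ n (update y _ _), divDiff_succ _ n y,
      ← update_comp_eq_of_injective y Nat.succ_injective, update_self,
      update_of_ne (Nat.succ_ne_zero n).symm, hupdate]
    field_simp [hne (n + 2) (n + 1), hne (n + 2) 0, hne (n + 1) 0]
    ring

end DividedDifference

section OrderedSimplex

def orderedSimplex (n : ℕ) : Set (Fin n → ℝ) :=
  {x | (∀ i, 0 ≤ x i ∧ x i ≤ 1) ∧ ∀ i j, i ≤ j → x i ≤ x j}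

lemma orderedSimplex_eq_Icc_inter (n : ℕ) : orderedSimplex n = Icc 0 1 ∩ {x | Monotone x} := by
  ext x
  simp only [orderedSimplex, mem_ofPred_eq, mem_inter_iff, mem_Icc, Pi.le_def, forall_and,
    Pi.zero_apply, Pi.one_apply]
  rfl

lemma isCompact_orderedSimplex (n : ℕ) : IsCompact (orderedSimplex n) := by
  rw [orderedSimplex_eq_Icc_inter]
  exact isCompact_Icc.inter_right isClosed_monotone

/-- The upper limit of the innermost coordinate `x 0` once the others are fixed. -/
def innerBound : {n : ℕ} → (Fin n → ℝ) → ℝ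
  | 0, _ => 1
  | _ + 1, y => y 0

lemma innerBound_mem_Icc {n : ℕ} {y : Fin n → ℝ} (hy : y ∈ orderedSimplex n) :
    innerBound y ∈ Icc 0 1 := by
  cases n with
  | zero => simp [innerBound]
  | succ n => exact hy.1 0

lemma Fin.cons_mem_orderedSimplex {n : ℕ} {t : ℝ} {y : Fin n → ℝ} :
    Fin.cons t y ∈ orderedSimplex (n + 1) ↔ y ∈ orderedSimplex n ∧ t ∈ Icc 0 (innerBound y) := by
  simp only [orderedSimplex, mem_ofPred_eq, Fin.forall_fin_succ, Fin.cons_zero, Fin.cons_succ,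
    le_refl, imp_true_iff, true_and, Fin.succ_le_succ_iff, Fin.succ_ne_zero, mem_Icc,
    Fin.le_zero_iff, Fin.zero_le, true_imp_iff, false_imp_iff]
  cases n with
  | zero => simp [innerBound]
  | succ n =>
    simp only [innerBound]
    constructor
    · rintro ⟨⟨⟨ht₀, -⟩, hy⟩, hty, hmono⟩
      exact ⟨⟨hy, hmono⟩, ht₀, hty 0⟩
    · rintro ⟨⟨hy, hmono⟩, ht₀, ht⟩
      exact ⟨⟨⟨ht₀, ht.trans (hy 0).2⟩, hy⟩, fun i => ht.trans (hmono 0 i (Fin.zero_le i)), hmono⟩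

lemma measurableSet_orderedSimplex (n : ℕ) : MeasurableSet (orderedSimplex n) :=
  (isCompact_orderedSimplex n).isClosed.measurableSet

lemma setIntegral_orderedSimplex_zero {E : Type*} [NormedAddCommGroup E] [NormedSpace ℝ E]
    [CompleteSpace E] (f : (Fin 0 → ℝ) → E) : ∫ x in orderedSimplex 0, f x = f 0 := by
  have huniv : orderedSimplex 0 = univ := eq_univ_of_forall fun x => ⟨finZeroElim, finZeroElim⟩
  rw [huniv, setIntegral_univ, volume_pi, Measure.pi_of_empty (x := 0), integral_dirac]

lemma integral_fin_cons {α E : Type*} [MeasureSpace α] [SigmaFinite (volume : Measure α)]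
    [NormedAddCommGroup E] [NormedSpace ℝ E] {n : ℕ} {f : (Fin (n + 1) → α) → E}
    (hf : Integrable f) : ∫ x, f x = ∫ y : Fin n → α, ∫ t, f (Fin.cons t y) := by
  have hmp := (volume_preserving_piFinSuccAbove (fun _ : Fin (n + 1) => α) 0).symm
  have hint := (hmp.integrable_comp_emb (MeasurableEquiv.measurableEmbedding _)).2 hf
  rw [← hmp.integral_comp', show (volume : Measure (α × (Fin n → α))) = volume.prod volume from rfl,
    integral_prod_symm (fun z => f ((MeasurableEquiv.piFinSuccAbove (fun _ => α) 0).symm z)) hint]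
  simp only [MeasurableEquiv.piFinSuccAbove_symm_apply, Fin.insertNthEquiv, Equiv.coe_fn_mk,
    Fin.insertNth_zero, cast_eq]

lemma setIntegral_orderedSimplex_succ {E : Type*} [NormedAddCommGroup E] [NormedSpace ℝ E]
    {n : ℕ} {f : (Fin (n + 1) → ℝ) → E} (hf : IntegrableOn f (orderedSimplex (n + 1))) :
    ∫ x in orderedSimplex (n + 1), f x =
      ∫ y in orderedSimplex n, ∫ t in 0..innerBound y, f (Fin.cons t y) := by
  rw [← integral_indicator (measurableSet_orderedSimplex _),
    integral_fin_cons ((integrable_indicator_iff (measurableSet_orderedSimplex _)).2 hf),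
    ← integral_indicator (measurableSet_orderedSimplex _)]
  congr 1
  funext y
  by_cases hy : y ∈ orderedSimplex n
  · rw [indicator_of_mem hy, intervalIntegral.integral_of_le (innerBound_mem_Icc hy).1,
      ← integral_Icc_eq_integral_Ioc, ← integral_indicator measurableSet_Icc]
    congr 1
    funext t
    by_cases ht : t ∈ Icc 0 (innerBound y)
    · rw [indicator_of_mem ht, indicator_of_mem (Fin.cons_mem_orderedSimplex.2 ⟨hy, ht⟩)]
    · rw [indicator_of_notMem ht,
        indicator_of_notMem fun h => ht (Fin.cons_mem_orderedSimplex.1 h).2]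
  · have hzero : ∀ t, (orderedSimplex (n + 1)).indicator f (Fin.cons t y) = 0 := fun t =>
      indicator_of_notMem (fun h => hy (Fin.cons_mem_orderedSimplex.1 h).1) _
    simp only [indicator_of_notMem hy, hzero, integral_zero]

end OrderedSimplex

section SuffixSum

variable {n : ℕ}

def suffixSum (a : Fin n → ℝ) (k : ℕ) : ℝ :=
  ∑ l : Fin n, if n - k ≤ (l : ℕ) then a l else 0

lemma suffixSum_zero (a : Fin n → ℝ) : suffixSum a 0 = 0 :=
  Finset.sum_eq_zero fun l _ => if_neg (by omega)

lemma suffixSum_self (a : Fin n → ℝ) : suffixSum a n = ∑ l, a l :=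
  Finset.sum_congr rfl fun _ _ => if_pos (by omega)

lemma suffixSum_tail (a : Fin (n + 1) → ℝ) {k : ℕ} (hk : k ≤ n) :
    suffixSum (Fin.tail a) k = suffixSum a k := by
  rw [suffixSum, suffixSum, Fin.sum_univ_succ, if_neg (by simp; omega), zero_add]
  refine Finset.sum_congr rfl fun l _ => ?_
  simp only [Fin.val_succ, Fin.tail]
  congr 1
  simp only [eq_iff_iff]
  omega

lemma suffixSum_succ_sub_self (a : Fin (n + 1) → ℝ) :
    suffixSum a (n + 1) - suffixSum a n = a 0 := by
  rw [← suffixSum_tail a le_rfl, suffixSum_self, suffixSum_self, Fin.sum_univ_succ]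
  simp [Fin.tail]

lemma suffixSum_cons_add_tail_tail (a : Fin (n + 2) → ℝ) :
    EqOn (suffixSum (Fin.cons (a 0 + a 1) (Fin.tail (Fin.tail a)) : Fin (n + 1) → ℝ))
      (update (suffixSum a) (n + 1) (suffixSum a (n + 2))) (Iic (n + 1)) := by
  intro k hk
  rcases (mem_Iic.1 hk).lt_or_eq with hk | rfl
  · rw [update_of_ne hk.ne, ← suffixSum_tail _ (by omega), Fin.tail_cons,
      suffixSum_tail _ (by omega), suffixSum_tail _ (by omega)]
  · rw [update_self, suffixSum_self, suffixSum_self, Fin.sum_univ_succ, Fin.sum_univ_succ a,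
      Fin.sum_univ_succ fun i => a i.succ]
    simp only [Fin.cons_zero, Fin.cons_succ, Fin.tail, Fin.succ_zero_eq_one]
    ring

end SuffixSum

section SimplexExpIntegral

open Real

variable {n : ℕ}

noncomputable def simplexExpIntegral (a : Fin n → ℝ) : ℝ :=
  ∫ x in orderedSimplex n, exp (∑ i, a i * x i)

lemma integrableOn_exp_orderedSimplex (a : Fin n → ℝ) :
    IntegrableOn (fun x => exp (∑ i, a i * x i)) (orderedSimplex n) :=
  (by fun_prop : Continuous fun x : Fin n → ℝ => exp (∑ i, a i * x i)).continuousOn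
    |>.integrableOn_compact (isCompact_orderedSimplex n)

lemma simplexExpIntegral_succ (a : Fin (n + 1) → ℝ) (ha : a 0 ≠ 0) :
    simplexExpIntegral a = ∫ y in orderedSimplex n,
      exp (∑ i, Fin.tail a i * y i) * ((exp (a 0 * innerBound y) - 1) / a 0) := by
  rw [simplexExpIntegral, setIntegral_orderedSimplex_succ (integrableOn_exp_orderedSimplex a)]
  congr 1
  funext y
  simp only [Fin.sum_univ_succ, Fin.cons_zero, Fin.cons_succ, Fin.tail, exp_add]
  rw [intervalIntegral.integral_mul_const, intervalIntegral.integral_comp_mul_left _ ha,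
    integral_exp, mul_zero, exp_zero, smul_eq_mul]
  field_simp

lemma simplexExpIntegral_one (a : Fin 1 → ℝ) (ha : a 0 ≠ 0) :
    simplexExpIntegral a = (exp (a 0) - 1) / a 0 := by
  rw [simplexExpIntegral_succ a ha, setIntegral_orderedSimplex_zero]
  simp [innerBound]

lemma simplexExpIntegral_succ_succ (a : Fin (n + 2) → ℝ) (ha : a 0 ≠ 0) :
    simplexExpIntegral a = (simplexExpIntegral (Fin.cons (a 0 + a 1) (Fin.tail (Fin.tail a)))
      - simplexExpIntegral (Fin.tail a)) / a 0 := by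
  rw [simplexExpIntegral_succ a ha, simplexExpIntegral, simplexExpIntegral,
    ← integral_sub (integrableOn_exp_orderedSimplex _) (integrableOn_exp_orderedSimplex _),
    ← integral_div]
  congr 1
  funext y
  have hsum : ∑ i, (Fin.cons (a 0 + a 1) (Fin.tail (Fin.tail a)) : Fin (n + 1) → ℝ) i * y i =
      a 0 * y 0 + ∑ i, Fin.tail a i * y i := by
    rw [Fin.sum_univ_succ, Fin.sum_univ_succ fun i => Fin.tail a i * y i]
    simp only [Fin.cons_zero, Fin.cons_succ, Fin.tail, Fin.succ_zero_eq_one]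
    ring
  rw [hsum, exp_add, innerBound]
  ring

theorem simplexExpIntegral_eq_divDiff :
    ∀ {n : ℕ} (a : Fin n → ℝ), InjOn (suffixSum a) (Iic n) →
      simplexExpIntegral a = divDiff exp n (suffixSum a)
  | 0, a, _ => by
    rw [simplexExpIntegral, setIntegral_orderedSimplex_zero]
    simp [divDiff, suffixSum_zero]
  | 1, a, h => by
    have ha : a 0 ≠ 0 := suffixSum_succ_sub_self a ▸
      sub_ne_zero.2 (h.ne (mem_Iic.2 le_rfl) (mem_Iic.2 zero_le_one) one_ne_zero)
    rw [simplexExpIntegral_one a ha, divDiff_succ, ← suffixSum_succ_sub_self a]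
    simp [divDiff, suffixSum_zero]
  | n + 2, a, h => by
    have ha : a 0 ≠ 0 := suffixSum_succ_sub_self a ▸
      sub_ne_zero.2 (h.ne (mem_Iic.2 le_rfl) (mem_Iic.2 (by omega)) (by omega))
    have htail : EqOn (suffixSum (Fin.tail a)) (suffixSum a) (Iic (n + 1)) :=
      fun k hk => suffixSum_tail a (mem_Iic.1 hk)
    have hmerge := suffixSum_cons_add_tail_tail a
    rw [simplexExpIntegral_succ_succ a ha,
      simplexExpIntegral_eq_divDiff _ (h.update_self_succ.congr hmerge.symm),
      simplexExpIntegral_eq_divDiff _ ((h.mono (Iic_subset_Iic.2 (by omega))).congr htail.symm),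
      divDiff_congr _ hmerge, divDiff_congr _ htail, divDiff_succ_eq_update _ h,
      suffixSum_succ_sub_self]

end SimplexExpIntegral

theorem iterated_integral_exp_eq_divDiff_general (n : ℕ) (a : Fin n → ℝ)
    (hdist : ∀ i j, i ≤ n → j ≤ n → i ≠ j →
      (∑ l : Fin n, if n - i ≤ (l : ℕ) then a l else 0) ≠
      (∑ l : Fin n, if n - j ≤ (l : ℕ) then a l else 0)) :
    (∫ x in {x : Fin n → ℝ | (∀ i, 0 ≤ x i ∧ x i ≤ 1) ∧ ∀ i j, i ≤ j → x i ≤ x j},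
        Real.exp (∑ i, a i * x i)) =
      divDiff Real.exp n (fun k => ∑ j : Fin n, if n - k ≤ (j : ℕ) then a j else 0) :=
  simplexExpIntegral_eq_divDiff a fun i hi j hj hij =>
    by_contra fun hne => hdist i j (mem_Iic.1 hi) (mem_Iic.1 hj) hne hij

/-- The iterated integral of `exp(a₁x₁ + ⋯ + aₙxₙ)` over the ordered simplex
`0 ≤ x₁ ≤ ⋯ ≤ xₙ ≤ 1` equals `exp[0, aₙ, aₙ+aₙ₋₁, ..., aₙ+⋯+a₁]`. -/
theorem iterated_integral_exp_eq_divDiff (n : ℕ) (a : Fin n → ℝ)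
    (ha : Function.Injective a)
    (hdist : ∀ i j, i ≤ n → j ≤ n → i ≠ j →
      (∑ l : Fin n, if n - i ≤ (l : ℕ) then a l else 0) ≠
      (∑ l : Fin n, if n - j ≤ (l : ℕ) then a l else 0)) :
    (∫ x in {x : Fin n → ℝ | (∀ i, 0 ≤ x i ∧ x i ≤ 1) ∧ ∀ i j, i ≤ j → x i ≤ x j},
        Real.exp (∑ i, a i * x i)) =
      divDiff Real.exp n (fun k => ∑ j : Fin n, if n - k ≤ (j : ℕ) then a j else 0) :=
  iterated_integral_exp_eq_divDiff_general n a hdist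
end

section
/- Let 0 < c_1 < c_2 < ... be a strictly increasing sequence of positive reals and define e_n(t) = exp[0, c_1 t, ..., c_n t] for t > 0 (the divided difference of the exponential). Then for all n ≥ 1 and t > 0: t·e_n'(t) = e_n(t)(c_n t − n) + e_{n−1}(t). -/
theorem divDiff_id_mul (f : ℝ → ℝ) (n : ℕ) {a : ℕ → ℝ} (ha : Function.Injective a) :
    divDiff (fun x => x * f x) (n + 1) a = a (n + 1) * divDiff f (n + 1) a + divDiff f n a := by
  induction n generalizing a with
  | zero =>
    have h : a 1 - a 0 ≠ 0 := sub_ne_zero.mpr (ha.ne one_ne_zero)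
    simp only [divDiff]
    field_simp
    ring
  | succ n ih =>
    have hshift : Function.Injective (fun i => a (i + 1)) := ha.comp (add_left_injective 1)
    have h₁ : a (n + 1) - a 0 ≠ 0 := sub_ne_zero.mpr (ha.ne n.succ_ne_zero)
    have h₂ : a (n + 2) - a 0 ≠ 0 := sub_ne_zero.mpr (ha.ne (n + 1).succ_ne_zero)
    rw [divDiff, ih ha, ih hshift]
    simp only [divDiff]
    field_simp
    ring

theorem hasDerivAt_divDiff_mul_const {f : ℝ → ℝ} (hf : Differentiable ℝ f) (n : ℕ)
    {c : ℕ → ℝ} (hc : Function.Injective c) {t : ℝ} (ht : t ≠ 0) :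
    HasDerivAt (fun s => divDiff f n (fun i => c i * s))
      ((divDiff (fun x => x * deriv f x) n (fun i => c i * t) -
        n * divDiff f n (fun i => c i * t)) / t) t := by
  induction n generalizing c with
  | zero =>
    refine ((hf (c 0 * t)).hasDerivAt.comp t (hasDerivAt_const_mul (c 0))).congr_deriv ?_
    simp only [divDiff, Nat.cast_zero, zero_mul, sub_zero]
    field_simp
  | succ n ih =>
    have hshift : Function.Injective (fun i => c (i + 1)) := hc.comp (add_left_injective 1)
    have hk : c (n + 1) - c 0 ≠ 0 := sub_ne_zero.mpr (hc.ne n.succ_ne_zero)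
    have hden : HasDerivAt (fun s => c (n + 1) * s - c 0 * s) (c (n + 1) - c 0) t :=
      (hasDerivAt_const_mul _).sub (hasDerivAt_const_mul _)
    refine (((ih hshift).sub (ih hc)).div hden
      (by rw [← sub_mul]; exact mul_ne_zero hk ht)).congr_deriv ?_
    simp only [divDiff, Pi.sub_apply]
    generalize divDiff f n (fun i => c (i + 1) * t) = F₁
    generalize divDiff f n (fun i => c i * t) = F₀
    generalize divDiff (fun x => x * deriv f x) n (fun i => c (i + 1) * t) = G₁
    generalize divDiff (fun x => x * deriv f x) n (fun i => c i * t) = G₀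
    push_cast
    field_simp
    ring

theorem divDiff_exp_ode_general (c : ℕ → ℝ) (hmono : StrictMono c)
    (n : ℕ) (hn : 1 ≤ n) (t : ℝ) (ht : 0 < t) :
    t * deriv (fun s => divDiff Real.exp n (fun i => c i * s)) t =
      divDiff Real.exp n (fun i => c i * t) * (c n * t - n) +
        divDiff Real.exp (n - 1) (fun i => c i * t) := by
  obtain ⟨m, rfl⟩ : ∃ m, n = m + 1 := ⟨n - 1, by omega⟩
  have hnodes : Function.Injective (fun i => c i * t) :=
    (mul_left_injective₀ ht.ne').comp hmono.injective
  rw [(hasDerivAt_divDiff_mul_const Real.differentiable_exp (m + 1) hmono.injective ht.ne').deriv,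
    Real.deriv_exp, divDiff_id_mul Real.exp m hnodes, mul_div_cancel₀ _ ht.ne',
    Nat.add_sub_cancel]
  ring

/-- The differential recurrence `t eₙ'(t) = eₙ(t)(cₙt − n) + eₙ₋₁(t)` for
`eₙ(t) = exp[0, c₁t, ..., cₙt]` with `0 = c₀ < c₁ < c₂ < ⋯`. -/
theorem divDiff_exp_ode (c : ℕ → ℝ) (hc0 : c 0 = 0) (hmono : StrictMono c)
    (n : ℕ) (hn : 1 ≤ n) (t : ℝ) (ht : 0 < t) :
    t * deriv (fun s => divDiff Real.exp n (fun i => c i * s)) t =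
      divDiff Real.exp n (fun i => c i * t) * (c n * t - n) +
        divDiff Real.exp (n - 1) (fun i => c i * t) :=
  divDiff_exp_ode_general c hmono n hn t ht
end

section
/- For integers m ≥ 1, reals r > 0 and T > 0, with b_k := kr + r·k(k−1) = r k² (the case r = σ²/2 of b_k = kr + σ²k(k−1)/2, so that b_k T = rT k²), the divided difference identity m!·exp[0, rT, 4rT, 9rT, ..., m²rT] = (m!/((2m)!·(rT)^m)) · Σ_{k=0}^{2m} C(2m,k)(−1)^k e^{rT(k−m)²} holds, assuming the points 0, rT, 4rT, ..., m²rT are distinct. -/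
open Finset

lemma divDiff_lagrange (f : ℝ → ℝ) :
    ∀ (n : ℕ) (a : ℕ → ℝ),
      (∀ i j, i ≤ n → j ≤ n → i ≠ j → a i ≠ a j) →
      divDiff f n a = ∑ i ∈ Finset.range (n+1),
        f (a i) / ∏ j ∈ (Finset.range (n+1)).erase i, (a i - a j) := by
  intro n
  induction n with
  | zero => intro a _; simp [divDiff]
  | succ n ih =>
    intro a ha
    have hd : a (n+1) - a 0 ≠ 0 :=
      sub_ne_zero.mpr (ha (n+1) 0 le_rfl (by omega) (by omega))
    set Q : ℕ → ℝ := fun i => ∏ j ∈ (Finset.range (n+2)).erase i, (a i - a j) with hQ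
    -- (A)
    have hA : ∀ i, i ≤ n →
        Q i = (∏ j ∈ (Finset.range (n+1)).erase i, (a i - a j)) * (a i - a (n+1)) := by
      intro i hi
      have hset : (Finset.range (n+2)).erase i
          = insert (n+1) ((Finset.range (n+1)).erase i) := by
        ext x; simp; omega
      rw [hQ]
      simp only
      rw [hset, Finset.prod_insert (by simp), mul_comm]
    -- (B)
    have hB : ∀ i, i ≤ n →
        Q (i+1) = (a (i+1) - a 0) *
          ∏ j ∈ (Finset.range (n+1)).erase i, (a (i+1) - a (j+1)) := by
      intro i hi
      have hset : (Finset.range (n+2)).erase (i+1)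
          = insert 0 (((Finset.range (n+1)).erase i).image (· + 1)) := by
        ext x
        simp only [Finset.mem_erase, Finset.mem_range, Finset.mem_insert, Finset.mem_image]
        constructor
        · rintro ⟨hx1, hx2⟩
          rcases Nat.eq_zero_or_pos x with h0 | h0
          · left; exact h0
          · right; exact ⟨x - 1, ⟨by omega, by omega⟩, by omega⟩
        · rintro (h0 | ⟨y, ⟨hy1, hy2⟩, rfl⟩) <;> omega
      rw [hQ]; simp only
      rw [hset, Finset.prod_insert (by simp), Finset.prod_image (by intro x _ y _ h; simp only at h; omega)]
    have hS1 : divDiff f n (fun i => a (i+1))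
        = ∑ i ∈ Finset.range (n+1), f (a (i+1)) * (a (i+1) - a 0) / Q (i+1) := by
      rw [ih (fun i => a (i+1)) (fun i j hi hj hij => ha (i+1) (j+1) (by omega) (by omega)
        (by omega))]
      refine Finset.sum_congr rfl fun i hi => ?_
      have hi' : i ≤ n := by simpa using Nat.lt_succ_iff.mp (Finset.mem_range.mp hi)
      rw [hB i hi']
      have hx : a (i+1) - a 0 ≠ 0 :=
        sub_ne_zero.mpr (ha (i+1) 0 (by omega) (by omega) (by omega))
      rw [mul_comm (f (a (i+1))) (a (i+1) - a 0), mul_div_mul_left _ _ hx]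
    have hS2 : divDiff f n a
        = ∑ i ∈ Finset.range (n+1), f (a i) * (a i - a (n+1)) / Q i := by
      rw [ih a (fun i j hi hj hij => ha i j (by omega) (by omega) hij)]
      refine Finset.sum_congr rfl fun i hi => ?_
      have hi' : i ≤ n := Nat.lt_succ_iff.mp (Finset.mem_range.mp hi)
      rw [hA i hi']
      have hy : a i - a (n+1) ≠ 0 :=
        sub_ne_zero.mpr (ha i (n+1) (by omega) le_rfl (by omega))
      rw [mul_div_mul_right _ _ hy]
    show (divDiff f n (fun i => a (i+1)) - divDiff f n a) / (a (n+1) - a 0) = _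
    rw [hS1, hS2]
    have h1 : ∑ i ∈ Finset.range (n+1), f (a (i+1)) * (a (i+1) - a 0) / Q (i+1)
        = ∑ i ∈ Finset.range (n+2), f (a i) * (a i - a 0) / Q i := by
      rw [Finset.sum_range_succ' (fun i => f (a i) * (a i - a 0) / Q i) (n+1)]
      simp
    have h2 : ∑ i ∈ Finset.range (n+1), f (a i) * (a i - a (n+1)) / Q i
        = ∑ i ∈ Finset.range (n+2), f (a i) * (a i - a (n+1)) / Q i := by
      rw [Finset.sum_range_succ (fun i => f (a i) * (a i - a (n+1)) / Q i) (n+1)]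
      simp
    rw [h1, h2, ← Finset.sum_sub_distrib]
    have h3 : ∀ i, f (a i) * (a i - a 0) / Q i - f (a i) * (a i - a (n+1)) / Q i
        = (a (n+1) - a 0) * (f (a i) / Q i) := by
      intro i
      rw [div_sub_div_same,
        show f (a i) * (a i - a 0) - f (a i) * (a i - a (n+1))
          = (a (n+1) - a 0) * f (a i) from by ring, mul_div_assoc]
    simp_rw [h3]
    rw [← Finset.mul_sum, mul_comm, mul_div_assoc, div_self hd, mul_one]

lemma prod_range_sub_cast (n : ℕ) :
    ∏ j ∈ Finset.range n, ((n : ℝ) - (j : ℝ)) = n.factorial := by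
  have : ∏ j ∈ Finset.range n, ((n : ℝ) - (j : ℝ))
      = ((∏ j ∈ Finset.range n, (n - j) : ℕ) : ℝ) := by
    rw [Nat.cast_prod]
    refine Finset.prod_congr rfl fun j hj => ?_
    have : j < n := Finset.mem_range.mp hj
    rw [Nat.cast_sub (le_of_lt this)]
  rw [this]
  congr 1
  rw [← Finset.prod_range_reflect]
  rw [← Finset.prod_range_add_one_eq_factorial n]
  refine Finset.prod_congr rfl fun j hj => ?_
  have : j < n := Finset.mem_range.mp hj
  omega

lemma fact_mul_prod (i n : ℕ) :
    i.factorial * ∏ j ∈ Finset.range n, (i+1+j) = (i+n).factorial := by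
  induction n with
  | zero => simp
  | succ n ih =>
    rw [Finset.prod_range_succ, ← mul_assoc, ih, show i + (n+1) = (i+n)+1 from rfl,
      Nat.factorial_succ]
    ring

lemma erase_split (m i : ℕ) (hi : i ≤ m) :
    (Finset.range (m+1)).erase i = Finset.range i ∪ Finset.Ico (i+1) (m+1) := by
  ext x; simp [Finset.mem_union, Finset.mem_Ico]; omega

lemma prodA (m i : ℕ) (hi : i ≤ m) :
    ∏ j ∈ (Finset.range (m+1)).erase i, ((i:ℝ) - (j:ℝ))
      = (-1)^(m-i) * i.factorial * (m-i).factorial := by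
  rw [erase_split m i hi, Finset.prod_union (by
    rw [Finset.disjoint_left]; intro x hx hx'
    simp [Finset.mem_Ico] at hx hx'; omega)]
  rw [prod_range_sub_cast i]
  rw [Finset.prod_Ico_eq_prod_range]
  have : ∀ k ∈ Finset.range (m+1-(i+1)), ((i:ℝ) - ((i+1+k : ℕ):ℝ)) = -((k:ℝ)+1) := by
    intro k _; push_cast; ring
  rw [Finset.prod_congr rfl this]
  have h2 : ∀ k ∈ Finset.range (m+1-(i+1)), -((k:ℝ)+1) = (-1) * ((k:ℝ)+1) := by
    intro k _; ring
  rw [Finset.prod_congr rfl h2, Finset.prod_mul_distrib, Finset.prod_const]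
  have hcard : m + 1 - (i+1) = m - i := by omega
  rw [hcard]
  have : ∏ k ∈ Finset.range (m-i), ((k:ℝ)+1) = ((m-i).factorial : ℝ) := by
    rw [← Finset.prod_range_add_one_eq_factorial (m-i), Nat.cast_prod]
    push_cast; rfl
  rw [this, Finset.card_range]; ring

lemma prodB_nat (m i : ℕ) (hi1 : 1 ≤ i) (hi : i ≤ m) :
    2 * i.factorial * ∏ j ∈ (Finset.range (m+1)).erase i, (i+j) = (m+i).factorial := by
  have hmem : i ∈ Finset.range (m+1) := Finset.mem_range.mpr (by omega)
  have h1 : ∏ j ∈ Finset.range (m+1), (i+j)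
      = (i+i) * ∏ j ∈ (Finset.range (m+1)).erase i, (i+j) :=
    (Finset.mul_prod_erase _ _ hmem).symm
  have h2 : (i-1).factorial * ∏ j ∈ Finset.range (m+1), (i+j) = (m+i).factorial := by
    have : ∀ j ∈ Finset.range (m+1), i + j = (i-1)+1+j := by intro j _; omega
    rw [Finset.prod_congr rfl this, fact_mul_prod]
    congr 1; omega
  have h3 : i.factorial = i * (i-1).factorial := by
    conv_lhs => rw [show i = (i-1)+1 from by omega]
    rw [Nat.factorial_succ]; congr 1; omega
  rw [h3]
  calc 2 * (i * (i-1).factorial) * ∏ j ∈ (Finset.range (m+1)).erase i, (i+j)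
      = (i-1).factorial * ((i+i) * ∏ j ∈ (Finset.range (m+1)).erase i, (i+j)) := by ring
    _ = (m+i).factorial := by rw [← h1, h2]

lemma prodB0 (m : ℕ) :
    ∏ j ∈ (Finset.range (m+1)).erase 0, ((0:ℝ) + (j:ℝ)) = m.factorial := by
  have hset : (Finset.range (m+1)).erase 0 = Finset.Ico 1 (m+1) := by
    ext x; simp [Finset.mem_Ico]; omega
  rw [hset, Finset.prod_Ico_eq_prod_range]
  have : ∀ k ∈ Finset.range (m+1-1), ((0:ℝ) + ((1+k : ℕ):ℝ)) = (k:ℝ)+1 := by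
    intro k _; push_cast; ring
  rw [Finset.prod_congr rfl this, show m+1-1 = m from rfl,
    ← Finset.prod_range_add_one_eq_factorial m, Nat.cast_prod]
  push_cast; rfl

lemma Qfact (m i : ℕ) (hi : i ≤ m) (c : ℝ) :
    ∏ j ∈ (Finset.range (m+1)).erase i, ((i:ℝ)^2*c - (j:ℝ)^2*c)
      = c^m * (∏ j ∈ (Finset.range (m+1)).erase i, ((i:ℝ)-(j:ℝ)))
          * (∏ j ∈ (Finset.range (m+1)).erase i, ((i:ℝ)+(j:ℝ))) := by
  have h1 : ∀ j ∈ (Finset.range (m+1)).erase i,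
      (i:ℝ)^2*c - (j:ℝ)^2*c = c * (((i:ℝ)-(j:ℝ)) * ((i:ℝ)+(j:ℝ))) := by
    intro j _; ring
  rw [Finset.prod_congr rfl h1, Finset.prod_mul_distrib, Finset.prod_const,
    Finset.prod_mul_distrib, Finset.card_erase_of_mem (Finset.mem_range.mpr (by omega)),
    Finset.card_range, Nat.add_sub_cancel]
  ring

/-- `m! exp[0, rT, 4rT, ..., m²rT]` as a binomial sum (the Oshanin–Yor moment
formula, via the symmetric equally spaced points `−m, ..., m`). -/
theorem moment_formula (m : ℕ) (hm : 1 ≤ m) (r T : ℝ) (hr : 0 < r) (hT : 0 < T) :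
    (m.factorial : ℝ) * divDiff Real.exp m (fun k => (k : ℝ) ^ 2 * (r * T)) =
      ((m.factorial : ℝ) / (((2 * m).factorial : ℝ) * (r * T) ^ m)) *
        ∑ k ∈ Finset.range (2 * m + 1),
          ((2 * m).choose k : ℝ) * (-1) ^ k * Real.exp (r * T * ((k : ℝ) - (m : ℝ)) ^ 2) := by
  have hc : 0 < r * T := mul_pos hr hT
  set c := r * T with hcdef
  have hcne : c ≠ 0 := ne_of_gt hc
  have hcm : c ^ m ≠ 0 := pow_ne_zero _ hcne
  set K : ℝ := (m.factorial : ℝ) / (((2 * m).factorial : ℝ) * c ^ m) with hK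
  set t : ℕ → ℝ := fun k =>
    ((2 * m).choose k : ℝ) * (-1) ^ k * Real.exp (c * ((k : ℝ) - (m : ℝ)) ^ 2) with ht
  have hdist : ∀ i j : ℕ, i ≤ m → j ≤ m → i ≠ j →
      (fun k : ℕ => (k:ℝ)^2 * c) i ≠ (fun k : ℕ => (k:ℝ)^2 * c) j := by
    intro i j _ _ hij h
    simp only at h
    have h2 : (i:ℝ)^2 = (j:ℝ)^2 := mul_right_cancel₀ hcne h
    have h3 : i^2 = j^2 := by exact_mod_cast h2
    exact hij (Nat.pow_left_injective (by norm_num) h3)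
  rw [divDiff_lagrange _ m _ hdist, Finset.mul_sum, Finset.mul_sum]
  have key : ∀ i ∈ Finset.range (m+1),
      (m.factorial : ℝ) * (Real.exp ((fun k : ℕ => (k:ℝ)^2 * c) i) /
        ∏ j ∈ (Finset.range (m+1)).erase i,
          ((fun k : ℕ => (k:ℝ)^2 * c) i - (fun k : ℕ => (k:ℝ)^2 * c) j))
      = K * t (m - i) + (if i = 0 then 0 else K * t (m+i)) := by
    intro i hi
    have him : i ≤ m := Nat.lt_succ_iff.mp (Finset.mem_range.mp hi)
    simp only
    rw [Qfact m i him c, prodA m i him]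
    by_cases h0 : i = 0
    · subst h0
      rw [if_pos rfl, add_zero, ht]
      simp only [Nat.cast_zero, Nat.sub_zero, Nat.factorial_zero]
      rw [show ((0:ℝ)^2 * c) = 0 from by ring, show (c * ((m:ℝ) - (m:ℝ))^2) = 0 from by ring,
        Real.exp_zero, prodB0 m, hK]
      have hCm : (((2*m).choose m : ℕ) : ℝ) * (m.factorial : ℝ) * (m.factorial : ℝ)
          = ((2*m).factorial : ℝ) := by
        have := Nat.choose_mul_factorial_mul_factorial (show m ≤ 2*m by omega)
        rw [show 2*m - m = m from by omega] at this
        exact_mod_cast this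
      have hfm : (m.factorial : ℝ) ≠ 0 := Nat.cast_ne_zero.mpr (Nat.factorial_ne_zero m)
      have hf2m : ((2*m).factorial : ℝ) ≠ 0 := Nat.cast_ne_zero.mpr (Nat.factorial_ne_zero _)
      rcases neg_one_pow_eq_or ℝ m with h1 | h1 <;> rw [h1] <;> field_simp
      · linear_combination (-1 : ℝ) * hCm
      · linear_combination (1 : ℝ) * hCm
    · have hi1 : 1 ≤ i := by omega
      rw [if_neg h0]
      -- plus-product via nat
      set B : ℝ := ∏ j ∈ (Finset.range (m+1)).erase i, ((i:ℝ)+(j:ℝ)) with hBdef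
      have hcast : B = ((∏ j ∈ (Finset.range (m+1)).erase i, (i+j) : ℕ) : ℝ) := by
        rw [hBdef, Nat.cast_prod]; push_cast; rfl
      have hB2 : 2 * (i.factorial : ℝ) * B = ((m+i).factorial : ℝ) := by
        rw [hcast]; exact_mod_cast prodB_nat m i hi1 him
      have hC : (((2*m).choose (m-i) : ℕ) : ℝ) * ((m-i).factorial : ℝ) * ((m+i).factorial : ℝ)
          = ((2*m).factorial : ℝ) := by
        have := Nat.choose_mul_factorial_mul_factorial (show m - i ≤ 2*m by omega)
        rw [show 2*m - (m-i) = m+i from by omega] at this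
        exact_mod_cast this
      have hCsymm : (2*m).choose (m+i) = (2*m).choose (m-i) := by
        have := Nat.choose_symm (show m+i ≤ 2*m by omega)
        rw [show 2*m - (m+i) = m-i from by omega] at this
        exact this.symm
      have hsign : ((-1:ℝ))^(m+i) = ((-1:ℝ))^(m-i) := by
        rw [show m+i = (m-i)+2*i from by omega, pow_add, pow_mul]
        norm_num
      have hexpa : Real.exp (c * (((m-i:ℕ):ℝ) - (m:ℝ))^2) = Real.exp ((i:ℝ)^2 * c) := by
        rw [Nat.cast_sub him]; ring_nf
      have hexpb : Real.exp (c * (((m+i:ℕ):ℝ) - (m:ℝ))^2) = Real.exp ((i:ℝ)^2 * c) := by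
        push_cast; ring_nf
      rw [ht]
      simp only
      rw [hexpa, hexpb, hCsymm, hsign, hK]
      have hfmi : ((m-i).factorial : ℝ) ≠ 0 := Nat.cast_ne_zero.mpr (Nat.factorial_ne_zero _)
      have hfi : (i.factorial : ℝ) ≠ 0 := Nat.cast_ne_zero.mpr (Nat.factorial_ne_zero _)
      have hfpi : ((m+i).factorial : ℝ) ≠ 0 := Nat.cast_ne_zero.mpr (Nat.factorial_ne_zero _)
      have hf2m : ((2*m).factorial : ℝ) ≠ 0 := Nat.cast_ne_zero.mpr (Nat.factorial_ne_zero _)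
      have hBne : B ≠ 0 := by
        intro h; rw [h, mul_zero] at hB2; exact hfpi hB2.symm
      set E : ℝ := Real.exp ((i:ℝ)^2 * c) with hE
      rcases neg_one_pow_eq_or ℝ (m-i) with h1 | h1 <;> rw [h1] <;> field_simp
      · linear_combination (-E) * hC
          - (E * (((2*m).choose (m-i) : ℕ):ℝ)
              * ((m-i).factorial:ℝ)) * hB2
      · linear_combination E * hC
          + (E * (((2*m).choose (m-i) : ℕ):ℝ) * ((m-i).factorial:ℝ)) * hB2
  rw [Finset.sum_congr rfl key, Finset.sum_add_distrib]
  have part1 : ∑ i ∈ Finset.range (m+1), K * t (m - i)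
      = ∑ k ∈ Finset.range (m+1), K * t k := by
    exact Finset.sum_range_reflect (fun k => K * t k) (m+1)
  have part2 : ∑ i ∈ Finset.range (m+1), (if i = 0 then (0:ℝ) else K * t (m+i))
      = ∑ i ∈ Finset.range m, K * t (m+1+i) := by
    rw [Finset.sum_range_succ' (fun i => if i = 0 then (0:ℝ) else K * t (m+i)) m]
    have h00 : (if (0:ℕ) = 0 then (0:ℝ) else K * t (m+0)) = 0 := if_pos rfl
    rw [h00, add_zero]
    refine Finset.sum_congr rfl fun i _ => ?_
    rw [if_neg (Nat.succ_ne_zero i), show m + (i+1) = m+1+i from by omega]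
  rw [part1, part2]
  have hsplit : ∑ k ∈ Finset.range (2*m+1), K * t k
      = ∑ k ∈ Finset.range (m+1), K * t k + ∑ i ∈ Finset.range m, K * t (m+1+i) := by
    rw [show 2*m+1 = (m+1)+m from by ring]
    exact Finset.sum_range_add (fun k => K * t k) (m+1) m
  rw [← hsplit]
end
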